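/- Let (x_q) be a multi-sequence of nonnegative reals indexed by q ∈ ℤ_+^k which is decreasing in each index and bounded, with limit L along the directed set ℤ_+^k. Then lim_{m→∞} (1 / C(m+k, k)) · Σ_{q_1+...+q_k ≤ m} x_q = L. -/

import Mathlib

/-!
The region `{q : q₁ + ⋯ + q_k ≤ m}` has `C(m + k, k)` points. For a fixed `N`, those with
some coordinate `qᵢ < Nᵢ` number at most
`(∑ Nᵢ) · C(m + k - 1, k - 1) = (∑ Nᵢ) · k / (m + k) · C(m + k, k)`,
a vanishing proportion, and at every other point `x_q` is close to `L`. Since `x` is bounded,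
the averages therefore converge to `L`.
-/

open Filter Finset Topology

section Average

variable {α : Type*} {f : α → ℝ} {L B : ℝ}

theorem abs_average_sub_le (s : Finset α) (hs : s.Nonempty) (U : Set α) [DecidablePred (· ∈ U)]
    {δ : ℝ} (hB : ∀ a, |f a - L| ≤ B) (hU : ∀ a ∈ U, |f a - L| ≤ δ) (hδ : 0 ≤ δ) :
    |(#s : ℝ)⁻¹ * ∑ a ∈ s, f a - L| ≤ B * (#{a ∈ s | a ∉ U} / #s) + δ := by
  have hn : (0 : ℝ) < #s := by exact_mod_cast hs.card_pos
  have hgood : (#{a ∈ s | a ∈ U} : ℝ) ≤ #s := by exact_mod_cast card_filter_le _ _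
  calc |(#s : ℝ)⁻¹ * ∑ a ∈ s, f a - L|
      = |(#s : ℝ)⁻¹ * ∑ a ∈ s, (f a - L)| := by
        rw [sum_sub_distrib, sum_const, nsmul_eq_mul, mul_sub, inv_mul_cancel_left₀ hn.ne']
    _ = (#s : ℝ)⁻¹ * |∑ a ∈ s, (f a - L)| := by rw [abs_mul, abs_of_pos (inv_pos.2 hn)]
    _ ≤ (#s : ℝ)⁻¹ *
          (∑ a ∈ s with a ∉ U, |f a - L| + ∑ a ∈ s with a ∈ U, |f a - L|) := by
        rw [sum_filter_not_add_sum_filter]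
        gcongr
        exact abs_sum_le_sum_abs _ _
    _ ≤ (#s : ℝ)⁻¹ * (#{a ∈ s | a ∉ U} * B + #{a ∈ s | a ∈ U} * δ) := by
        gcongr
        · simpa using sum_le_card_nsmul _ _ _ fun a _ => hB a
        · simpa using sum_le_card_nsmul _ _ _ fun a ha => hU a (mem_filter.1 ha).2
    _ ≤ (#s : ℝ)⁻¹ * (#{a ∈ s | a ∉ U} * B + #s * δ) := by gcongr
    _ = B * (#{a ∈ s | a ∉ U} / #s) + δ := by field_simp

open scoped Classical in
theorem tendsto_average_of_tendsto {l : Filter α} (hB : ∀ a, |f a - L| ≤ B)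
    (hf : Tendsto f l (𝓝 L)) {s : ℕ → Finset α} (hne : ∀ m, (s m).Nonempty)
    (hs : ∀ U ∈ l, Tendsto (fun m => (#{a ∈ s m | a ∉ U} : ℝ) / #(s m)) atTop (𝓝 0)) :
    Tendsto (fun m => (#(s m) : ℝ)⁻¹ * ∑ a ∈ s m, f a) atTop (𝓝 L) := by
  refine Metric.tendsto_nhds.2 fun ε hε => ?_
  set U := {a | |f a - L| ≤ ε / 2}
  have hU : U ∈ l := (Metric.tendsto_nhds.1 hf _ (half_pos hε)).mono fun a ha => ha.le
  have hsmall : ∀ᶠ m in atTop, B * (#{a ∈ s m | a ∉ U} / #(s m)) < ε / 2 :=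
    ((hs U hU).const_mul B).eventually (gt_mem_nhds (by simpa using half_pos hε))
  filter_upwards [hsmall] with m hm
  rw [Real.dist_eq]
  calc _ ≤ B * (#{a ∈ s m | a ∉ U} / #(s m)) + ε / 2 :=
        abs_average_sub_le _ (hne m) U hB (fun a ha => ha) (half_pos hε).le
    _ < ε := by linarith

end Average

namespace Finset.Nat

theorem card_antidiagonalTuple (k n : ℕ) : #(antidiagonalTuple k n) = k.multichoose n := by
  rw [← piAntidiag_univ_fin_eq_antidiagonalTuple, ← map_sym_eq_piAntidiag, card_map, sym_univ,
    card_univ, Sym.card_sym_fin_eq_multichoose]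

def simplexTuple (k m : ℕ) : Finset (Fin k → ℕ) :=
  (range (m + 1)).biUnion (antidiagonalTuple k)

variable {k m : ℕ}

@[simp]
theorem mem_simplexTuple {q : Fin k → ℕ} : q ∈ simplexTuple k m ↔ ∑ i, q i ≤ m := by
  simp [simplexTuple, mem_antidiagonalTuple]

theorem pairwiseDisjoint_antidiagonalTuple (k : ℕ) (s : Set ℕ) :
    s.PairwiseDisjoint (antidiagonalTuple k) := fun _ _ _ _ hij =>
  disjoint_left.2 fun _ hi hj =>
    hij ((mem_antidiagonalTuple.1 hi).symm.trans (mem_antidiagonalTuple.1 hj))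

theorem sum_simplexTuple {M : Type*} [AddCommMonoid M] (f : (Fin k → ℕ) → M) :
    ∑ q ∈ simplexTuple k m, f q =
      ∑ j ∈ range (m + 1), ∑ q ∈ antidiagonalTuple k j, f q :=
  sum_biUnion (pairwiseDisjoint_antidiagonalTuple k _)

theorem card_simplexTuple (k m : ℕ) : #(simplexTuple k m) = (m + k).choose k := by
  rw [card_eq_sum_ones, sum_simplexTuple, ← Nat.sum_range_multichoose]
  simp [card_antidiagonalTuple]

theorem simplexTuple_nonempty (k m : ℕ) : (simplexTuple k m).Nonempty :=
  ⟨0, by simp⟩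

theorem card_filter_lt_simplexTuple_le (i : Fin (k + 1)) (n : ℕ) :
    #{q ∈ simplexTuple (k + 1) m | q i < n} ≤ n * #(simplexTuple k m) := by
  calc #{q ∈ simplexTuple (k + 1) m | q i < n}
      ≤ #(range n ×ˢ simplexTuple k m) := by
        refine card_le_card_of_injOn (fun q => (q i, i.removeNth q)) ?_ ?_
        · intro q hq
          simp only [coe_filter, mem_simplexTuple, Set.mem_ofPred_eq] at hq
          simp only [coe_product, coe_range, Set.mem_prod, Set.mem_Iio, mem_coe,
            mem_simplexTuple, Fin.removeNth_apply]
          exact ⟨hq.2, by rw [Fin.sum_univ_succAbove q i] at hq; omega⟩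
        · intro q _ r _ hqr
          rw [← Fin.insertNth_self_removeNth i q, ← Fin.insertNth_self_removeNth i r]
          simp only [Prod.mk.injEq] at hqr
          rw [hqr.1, hqr.2]
    _ = n * #(simplexTuple k m) := by rw [card_product, card_range]

theorem card_filter_exists_lt_simplexTuple_le (N : Fin (k + 1) → ℕ) :
    #{q ∈ simplexTuple (k + 1) m | ∃ i, q i < N i} ≤ (∑ i, N i) * #(simplexTuple k m) := by
  have hcover : {q ∈ simplexTuple (k + 1) m | ∃ i, q i < N i}
      ⊆ univ.biUnion fun i => {q ∈ simplexTuple (k + 1) m | q i < N i} := by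
    intro q hq
    simpa using hq
  calc #{q ∈ simplexTuple (k + 1) m | ∃ i, q i < N i}
      ≤ ∑ i, #{q ∈ simplexTuple (k + 1) m | q i < N i} :=
        (card_le_card hcover).trans card_biUnion_le
    _ ≤ ∑ i, N i * #(simplexTuple k m) :=
        sum_le_sum fun i _ => card_filter_lt_simplexTuple_le i (N i)
    _ = (∑ i, N i) * #(simplexTuple k m) := (sum_mul ..).symm

open scoped Classical in
theorem tendsto_card_filter_notMem_div_card_simplexTuple {U : Set (Fin (k + 1) → ℕ)}
    (hU : U ∈ atTop) :
    Tendsto (fun m => (#{q ∈ simplexTuple (k + 1) m | q ∉ U} : ℝ) / #(simplexTuple (k + 1) m))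
      atTop (𝓝 0) := by
  obtain ⟨N, hN⟩ := mem_atTop_sets.1 hU
  have hbound (m : ℕ) :
      (#{q ∈ simplexTuple (k + 1) m | q ∉ U} : ℝ) / #(simplexTuple (k + 1) m)
        ≤ (∑ i, N i) * (k + 1 : ℝ) / (m + k + 1 : ℕ) := by
    have hsub : {q ∈ simplexTuple (k + 1) m | q ∉ U}
        ⊆ {q ∈ simplexTuple (k + 1) m | ∃ i, q i < N i} := by
      intro q hq
      rw [mem_filter] at hq ⊢
      refine ⟨hq.1, ?_⟩
      by_contra! hle
      exact hq.2 (hN q hle)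
    have hcard : (#{q ∈ simplexTuple (k + 1) m | q ∉ U} : ℝ)
        ≤ (∑ i, N i) * (m + k).choose k := by
      rw [← card_simplexTuple]
      exact_mod_cast (card_le_card hsub).trans (card_filter_exists_lt_simplexTuple_le N)
    have hchoose : ((m + k + 1 : ℕ) : ℝ) * (m + k).choose k
        = (m + (k + 1)).choose (k + 1) * (k + 1) := by
      exact_mod_cast Nat.add_one_mul_choose_eq (m + k) k
    rw [card_simplexTuple, div_le_div_iff₀ (by simp [Nat.choose_pos]) (by positivity)]
    calc (#{q ∈ simplexTuple (k + 1) m | q ∉ U} : ℝ) * (m + k + 1 : ℕ)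
        ≤ (∑ i, N i) * (m + k).choose k * (m + k + 1 : ℕ) := by gcongr
      _ = (∑ i, N i) * (((m + k + 1 : ℕ) : ℝ) * (m + k).choose k) := by ring
      _ = (∑ i, N i) * (k + 1 : ℝ) * (m + (k + 1)).choose (k + 1) := by
          rw [hchoose]; ring
  refine squeeze_zero (fun m => by positivity) hbound ?_
  exact (tendsto_const_div_atTop_nhds_zero_nat _).comp (tendsto_add_atTop_nat (k + 1))

end Finset.Nat

theorem stmt5_general {k : ℕ} (hk : 1 ≤ k) (x : (Fin k → ℕ) → ℝ) (L : ℝ)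
    (hpos : ∀ q, 0 ≤ x q) (hbdd : ∃ C, ∀ q, x q ≤ C)
    (hlim : Filter.Tendsto x Filter.atTop (nhds L)) :
    Filter.Tendsto
      (fun m : ℕ =>
        (((m + k).choose k : ℝ))⁻¹ *
          ∑ j ∈ Finset.range (m + 1), ∑ q ∈ Finset.Nat.antidiagonalTuple k j, x q)
      Filter.atTop (nhds L) := by
  obtain ⟨C, hC⟩ := hbdd
  have hL : L ∈ Set.Icc 0 C :=
    isClosed_Icc.mem_of_tendsto hlim (.of_forall fun q => ⟨hpos q, hC q⟩)
  obtain ⟨k, rfl⟩ : ∃ k', k = k' + 1 := ⟨k - 1, by omega⟩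
  simp_rw [← Nat.sum_simplexTuple, ← Nat.card_simplexTuple]
  exact tendsto_average_of_tendsto
    (fun q => abs_sub_le_of_nonneg_of_le (hpos q) (hC q) hL.1 hL.2) hlim
    (Nat.simplexTuple_nonempty _)
    fun _ hU => Nat.tendsto_card_filter_notMem_div_card_simplexTuple hU

/-- Cesàro means over the regions {q : q₁+⋯+q_k ≤ m} of a bounded multi-sequence of
nonnegative reals, decreasing in each index, converge to its limit L along ℤ₊^k. -/
theorem stmt5 {k : ℕ} (hk : 1 ≤ k) (x : (Fin k → ℕ) → ℝ) (L : ℝ)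
    (hpos : ∀ q, 0 ≤ x q) (hbdd : ∃ C, ∀ q, x q ≤ C)
    (hdec : ∀ q (i : Fin k), x (Function.update q i (q i + 1)) ≤ x q)
    (hlim : Filter.Tendsto x Filter.atTop (nhds L)) :
    Filter.Tendsto
      (fun m : ℕ =>
        (((m + k).choose k : ℝ))⁻¹ *
          ∑ j ∈ Finset.range (m + 1), ∑ q ∈ Finset.Nat.antidiagonalTuple k j, x q)
      Filter.atTop (nhds L) :=
  stmt5_general hk x L hpos hbdd hlim
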